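/- arXiv:2307.08179 — 5 statements merged into one kernel-verified Lean document; each statement's English description precedes it below -/
import Mathlib

section
/- In a category of fibrant objects, if s is a section of a trivial fibration t : X′ → X (i.e. t∘s = id_X), then s∘t is homotopic to the identity of X′, where homotopy is witnessed by a path space object for X′. -/
open CategoryTheory Limits

universe u v

/-- A category of fibrant objects in the sense of K. Brown: distinguished classes of
fibrations and weak equivalences, satisfying Brown's axioms (2-out-of-3, closure under
composition, every object fibrant, base change of (trivial) fibrations, existence of
path space objects and of factorizations). -/
structure BrownCFO (C : Type u) [Category.{v} C] [HasTerminal C] [HasBinaryProducts C] where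
  /-- the class of fibrations -/
  Fib : ∀ {X Y : C}, (X ⟶ Y) → Prop
  /-- the class of weak equivalences -/
  Weq : ∀ {X Y : C}, (X ⟶ Y) → Prop
  weq_id : ∀ X : C, Weq (𝟙 X)
  weq_of_comp_left : ∀ {X Y Z : C} (f : X ⟶ Y) (g : Y ⟶ Z), Weq f → Weq (f ≫ g) → Weq g
  weq_of_comp_right : ∀ {X Y Z : C} (f : X ⟶ Y) (g : Y ⟶ Z), Weq g → Weq (f ≫ g) → Weq f
  weq_comp : ∀ {X Y Z : C} (f : X ⟶ Y) (g : Y ⟶ Z), Weq f → Weq g → Weq (f ≫ g)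
  fib_id : ∀ X : C, Fib (𝟙 X)
  fib_comp : ∀ {X Y Z : C} (f : X ⟶ Y) (g : Y ⟶ Z), Fib f → Fib g → Fib (f ≫ g)
  /-- every object is fibrant -/
  fib_terminal : ∀ X : C, Fib (terminal.from X)
  /-- pullbacks along fibrations exist -/
  hasPullback_of_fib : ∀ {X Y Z : C} (f : X ⟶ Z) (g : Y ⟶ Z), Fib g → HasPullback f g
  /-- fibrations are stable under base change -/
  fib_stable : ∀ {X Y Z : C} (f : X ⟶ Z) (g : Y ⟶ Z), Fib g →
    ∀ [HasPullback f g], Fib (pullback.fst f g)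
  /-- trivial fibrations are stable under base change -/
  trivFib_stable : ∀ {X Y Z : C} (f : X ⟶ Z) (g : Y ⟶ Z), Fib g → Weq g →
    ∀ [HasPullback f g], Weq (pullback.fst f g)
  /-- existence of path space objects -/
  pathObj : ∀ Y : C, ∃ (P : C) (ι : Y ⟶ P) (e : P ⟶ Y ⨯ Y),
    Weq ι ∧ Fib e ∧ ι ≫ e = prod.lift (𝟙 Y) (𝟙 Y)
  /-- every morphism factors as a weak equivalence followed by a fibration -/
  factor : ∀ {X Y : C} (f : X ⟶ Y), ∃ (Z : C) (w : X ⟶ Z) (p : Z ⟶ Y),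
    Weq w ∧ Fib p ∧ w ≫ p = f

/-- Two morphisms `f g : X ⟶ Y` are homotopic if there is a path space object `P` for `Y`
and a morphism `h : X ⟶ P` whose compositions with the two evaluation maps are `f`
and `g`. -/
def BrownCFO.Homotopic {C : Type u} [Category.{v} C] [HasTerminal C] [HasBinaryProducts C]
    (S : BrownCFO C) {X Y : C} (f g : X ⟶ Y) : Prop :=
  ∃ (P : C) (ι : Y ⟶ P) (e : P ⟶ Y ⨯ Y),
    S.Weq ι ∧ S.Fib e ∧ ι ≫ e = prod.lift (𝟙 Y) (𝟙 Y) ∧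
    ∃ h : X ⟶ P, h ≫ e ≫ prod.fst = f ∧ h ≫ e ≫ prod.snd = g

/-- If `s` is a section of a trivial fibration `t : X′ → X`, then `s ∘ t` is homotopic
to the identity of `X′`. -/
theorem stmt_7 {C : Type u} [Category.{v} C] [HasTerminal C] [HasBinaryProducts C]
    (S : BrownCFO C) {X' X : C} (t : X' ⟶ X) (ht_fib : S.Fib t) (ht_weq : S.Weq t)
    (s : X ⟶ X') (hs : s ≫ t = 𝟙 X) :
    S.Homotopic (t ≫ s) (𝟙 X') := by
  haveI : HasPullback t t := S.hasPullback_of_fib t t ht_fib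
  -- factor the map (fst, snd) : X' ×_X X' ⟶ X' ⨯ X' as a weq followed by a fibration
  obtain ⟨Z, w, p, hw, hp, hwp⟩ :=
    S.factor (prod.lift (pullback.fst t t) (pullback.snd t t))
  -- the diagonal section of the trivial fibration pullback.fst t t
  have hfst_fib : S.Fib (pullback.fst t t) := S.fib_stable t t ht_fib
  have hfst_weq : S.Weq (pullback.fst t t) := S.trivFib_stable t t ht_fib ht_weq
  set δ : X' ⟶ pullback t t := pullback.lift (𝟙 X') (𝟙 X') rfl with hδdef
  have hδ1 : δ ≫ pullback.fst t t = 𝟙 X' := pullback.lift_fst _ _ _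
  have hδweq : S.Weq δ := by
    apply S.weq_of_comp_right δ (pullback.fst t t) hfst_weq
    rw [hδ1]; exact S.weq_id X'
  -- the section (t ≫ s, 𝟙) of pullback.fst t t
  set c : X' ⟶ pullback t t := pullback.lift (t ≫ s) (𝟙 X')
    (by rw [Category.assoc, hs, Category.comp_id, Category.id_comp]) with hcdef
  refine ⟨Z, δ ≫ w, p, S.weq_comp δ w hδweq hw, hp, ?_, c ≫ w, ?_, ?_⟩
  · rw [Category.assoc, hwp, prod.comp_lift, pullback.lift_fst, pullback.lift_snd]
  · rw [Category.assoc, ← Category.assoc w p, hwp, prod.lift_fst, pullback.lift_fst]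
  · rw [Category.assoc, ← Category.assoc w p, hwp, prod.lift_snd, pullback.lift_snd]
end

section
/- In a category of fibrant objects in which every trivial fibration admits a section, if f ≃ g (f is homotopic to g) then u∘f ≃ u∘g and f∘v ≃ g∘v whenever these compositions are defined. -/
open CategoryTheory Limits

universe u v

/-!
Precomposition is immediate; post-composition is the real point. Given path objects `P` for `Y`
and `P'` for `Z`, it suffices to find `k : P ⟶ P'` over `u × u`, since then `h ≫ k` is a homotopy
from `f ≫ u` to `g ≫ u`. Such a `k` comes from a section of the pullback `r` of `P' ⟶ Z × Z` along
`P ⟶ Y × Y ⟶ Z × Z`. The fibration `r` need not be a weak equivalence, but the weak equivalence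
`Y ⟶ P` factors through it; factoring that map `Y ⟶ Q` as a weak equivalence followed by a
fibration `q`, the composite `q ≫ r` is a trivial fibration by 2-out-of-3, and a section of it
followed by `q` is a section of `r`.
-/

namespace BrownCFO

variable {C : Type u} [Category.{v} C] [HasTerminal C] [HasBinaryProducts C] (S : BrownCFO C)

def HasTrivFibSections : Prop :=
  ∀ {X Y : C} (t : X ⟶ Y), S.Fib t → S.Weq t → ∃ s : Y ⟶ X, s ≫ t = 𝟙 Y

variable {S}

theorem HasTrivFibSections.exists_section_of_fib {A B T : C} (hsec : S.HasTrivFibSections)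
    (i : A ⟶ B) (hi : S.Weq i) (r : T ⟶ B) (hr : S.Fib r) (j : A ⟶ T) (hjr : j ≫ r = i) :
    ∃ s : B ⟶ T, s ≫ r = 𝟙 B := by
  obtain ⟨T', w, q, hw, hq, hwq⟩ := S.factor j
  have hqr : S.Weq (q ≫ r) :=
    S.weq_of_comp_left w _ hw (by rwa [← Category.assoc, hwq, hjr])
  obtain ⟨s, hs⟩ := hsec _ (S.fib_comp q r hq hr) hqr
  exact ⟨s ≫ q, by rw [Category.assoc, hs]⟩

theorem HasTrivFibSections.exists_lift {A B E D : C} (hsec : S.HasTrivFibSections)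
    (i : A ⟶ B) (hi : S.Weq i) (p : E ⟶ D) (hp : S.Fib p) (φ : B ⟶ D) (a : A ⟶ E)
    (sq : i ≫ φ = a ≫ p) : ∃ k : B ⟶ E, k ≫ p = φ := by
  have := S.hasPullback_of_fib φ p hp
  obtain ⟨s, hs⟩ := hsec.exists_section_of_fib i hi (pullback.fst φ p) (S.fib_stable φ p hp)
    (pullback.lift i a sq) (pullback.lift_fst _ _ _)
  refine ⟨s ≫ pullback.snd φ p, ?_⟩
  rw [Category.assoc, ← pullback.condition, ← Category.assoc, hs, Category.id_comp]

theorem HasTrivFibSections.exists_pathObj_map {Y Z P P' : C} (hsec : S.HasTrivFibSections)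
    (u : Y ⟶ Z) (ι : Y ⟶ P) (e : P ⟶ Y ⨯ Y) (hι : S.Weq ι)
    (hιe : ι ≫ e = prod.lift (𝟙 Y) (𝟙 Y)) (ι' : Z ⟶ P') (e' : P' ⟶ Z ⨯ Z) (he' : S.Fib e')
    (hιe' : ι' ≫ e' = prod.lift (𝟙 Z) (𝟙 Z)) :
    ∃ k : P ⟶ P', k ≫ e' = e ≫ prod.map u u := by
  refine hsec.exists_lift ι hι e' he' _ (u ≫ ι') ?_
  rw [← Category.assoc, hιe, Category.assoc, hιe']
  ext <;> simp

theorem Homotopic.comp_right (hsec : S.HasTrivFibSections) {X Y Z : C} {f g : X ⟶ Y}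
    (hfg : S.Homotopic f g) (u : Y ⟶ Z) : S.Homotopic (f ≫ u) (g ≫ u) := by
  obtain ⟨P, ι, e, hι, -, hιe, h, hf, hg⟩ := hfg
  obtain ⟨P', ι', e', hι', he', hιe'⟩ := S.pathObj Z
  obtain ⟨k, hk⟩ := hsec.exists_pathObj_map u ι e hι hιe ι' e' he' hιe'
  refine ⟨P', ι', e', hι', he', hιe', h ≫ k, ?_, ?_⟩
  · rw [Category.assoc, reassoc_of% hk, prod.map_fst, ← hf]; simp
  · rw [Category.assoc, reassoc_of% hk, prod.map_snd, ← hg]; simp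

theorem Homotopic.comp_left {W X Y : C} {f g : X ⟶ Y} (hfg : S.Homotopic f g) (v : W ⟶ X) :
    S.Homotopic (v ≫ f) (v ≫ g) := by
  obtain ⟨P, ι, e, hι, he, hιe, h, hf, hg⟩ := hfg
  exact ⟨P, ι, e, hι, he, hιe, v ≫ h, by simp [hf], by simp [hg]⟩

end BrownCFO

/-- In a category of fibrant objects in which every trivial fibration admits a section,
homotopy is compatible with composition on both sides: if `f ≃ g` then `u∘f ≃ u∘g`
and `f∘v ≃ g∘v`. -/
theorem stmt_8 {C : Type u} [Category.{v} C] [HasTerminal C] [HasBinaryProducts C]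
    (S : BrownCFO C)
    (hsec : ∀ {X Y : C} (t : X ⟶ Y), S.Fib t → S.Weq t → ∃ s : Y ⟶ X, s ≫ t = 𝟙 Y)
    {W X Y Z : C} (f g : X ⟶ Y) (hfg : S.Homotopic f g) (u : Y ⟶ Z) (v : W ⟶ X) :
    S.Homotopic (f ≫ u) (g ≫ u) ∧ S.Homotopic (v ≫ f) (v ≫ g) :=
  ⟨hfg.comp_right hsec u, hfg.comp_left v⟩
end

section
/- In a category of fibrant objects satisfying the property that every trivial fibration admits a section, every weak equivalence is a homotopy equivalence: if w : X → Y is a weak equivalence then there exists y : Y → X with w∘y ≃ id_Y and y∘w ≃ id_X. -/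
open CategoryTheory Limits

universe u v

namespace BrownCFO

variable {C : Type u} [Category.{v} C] [HasTerminal C] [HasBinaryProducts C] (S : BrownCFO C)

/-- A weakening of `Homotopic`: the structure map of the "path object" witnessing the
homotopy is not required to be a fibration. -/
def Pre {X Y : C} (f g : X ⟶ Y) : Prop :=
  ∃ (P : C) (ι : Y ⟶ P) (e : P ⟶ Y ⨯ Y),
    S.Weq ι ∧ ι ≫ e = prod.lift (𝟙 Y) (𝟙 Y) ∧
    ∃ h : X ⟶ P, h ≫ e ≫ prod.fst = f ∧ h ≫ e ≫ prod.snd = g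

theorem pre_of_homotopic {X Y : C} {f g : X ⟶ Y} (h : S.Homotopic f g) : S.Pre f g := by
  obtain ⟨P, ι, e, h1, _, h3, hh⟩ := h
  exact ⟨P, ι, e, h1, h3, hh⟩

/-- Two maps which are equalized by a trivial fibration are pre-homotopic. -/
theorem pre_of_eq_comp
    (hsec : ∀ {X Y : C} (t : X ⟶ Y), S.Fib t → S.Weq t → ∃ s : Y ⟶ X, s ≫ t = 𝟙 Y)
    {T R B : C} (r : R ⟶ B) (hrF : S.Fib r) (hrW : S.Weq r)
    (f₁ f₂ : T ⟶ R) (hEq : f₁ ≫ r = f₂ ≫ r) : S.Pre f₁ f₂ := by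
  haveI := S.hasPullback_of_fib r r hrF
  have hfstF : S.Fib (pullback.fst r r) := S.fib_stable r r hrF
  have hfstW : S.Weq (pullback.fst r r) := S.trivFib_stable r r hrF hrW
  -- the diagonal
  have hδc : 𝟙 R ≫ r = 𝟙 R ≫ r := rfl
  have hδfst : pullback.lift (𝟙 R) (𝟙 R) hδc ≫ pullback.fst r r = 𝟙 R :=
    pullback.lift_fst _ _ _
  have hδsnd : pullback.lift (𝟙 R) (𝟙 R) hδc ≫ pullback.snd r r = 𝟙 R :=
    pullback.lift_snd _ _ _
  have hδW : S.Weq (pullback.lift (𝟙 R) (𝟙 R) hδc) :=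
    S.weq_of_comp_right _ (pullback.fst r r) hfstW (by rw [hδfst]; exact S.weq_id R)
  obtain ⟨N, j, q, hjW, hqF, hjq⟩ := S.factor (pullback.lift (𝟙 R) (𝟙 R) hδc)
  have hqW : S.Weq q := S.weq_of_comp_left j q hjW (by rw [hjq]; exact hδW)
  obtain ⟨σ, hσ⟩ := hsec q hqF hqW
  refine ⟨N, j, q ≫ prod.lift (pullback.fst r r) (pullback.snd r r), hjW, ?_,
    pullback.lift f₁ f₂ hEq ≫ σ, ?_, ?_⟩
  · rw [← Category.assoc, hjq, prod.comp_lift, hδfst, hδsnd]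
  · rw [Category.assoc, Category.assoc, prod.lift_fst, ← Category.assoc σ q,
      hσ, Category.id_comp, pullback.lift_fst]
  · rw [Category.assoc, Category.assoc, prod.lift_snd, ← Category.assoc σ q,
      hσ, Category.id_comp, pullback.lift_snd]

/-- A pre-homotopy between `f₁ f₂ : T ⟶ R` can be pushed forward along any `k : R ⟶ B`
to a homotopy with values in any prescribed path object of `B`. -/
theorem exists_lift_of_pre
    (hsec : ∀ {X Y : C} (t : X ⟶ Y), S.Fib t → S.Weq t → ∃ s : Y ⟶ X, s ≫ t = 𝟙 Y)
    {T R B : C} {f₁ f₂ : T ⟶ R} (hpre : S.Pre f₁ f₂) (k : R ⟶ B)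
    (Q : C) (ιQ : B ⟶ Q) (eQ : Q ⟶ B ⨯ B) (hιQ : S.Weq ιQ) (heQ : S.Fib eQ)
    (hQ : ιQ ≫ eQ = prod.lift (𝟙 B) (𝟙 B)) :
    ∃ H : T ⟶ Q, H ≫ eQ = prod.lift (f₁ ≫ k) (f₂ ≫ k) := by
  obtain ⟨P, ι, e, hι, hιe, h, h1, h2⟩ := hpre
  have he : h ≫ e = prod.lift f₁ f₂ := by
    apply Limits.prod.hom_ext
    · rw [Category.assoc, h1, prod.lift_fst]
    · rw [Category.assoc, h2, prod.lift_snd]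
  haveI := S.hasPullback_of_fib (e ≫ prod.map k k) eQ heQ
  have hcond : ι ≫ (e ≫ prod.map k k) = (k ≫ ιQ) ≫ eQ := by
    have l1 : ι ≫ (e ≫ prod.map k k) = prod.lift k k := by
      rw [← Category.assoc, hιe, prod.lift_map]; simp
    have l2 : (k ≫ ιQ) ≫ eQ = prod.lift k k := by
      rw [Category.assoc, hQ, prod.comp_lift]; simp
    rw [l1, l2]
  obtain ⟨M, c, q, hcW, hqF, hcq⟩ := S.factor (pullback.lift ι (k ≫ ιQ) hcond)
  have hπF : S.Fib (q ≫ pullback.fst (e ≫ prod.map k k) eQ) :=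
    S.fib_comp _ _ hqF (S.fib_stable _ _ heQ)
  have hcπ : c ≫ q ≫ pullback.fst (e ≫ prod.map k k) eQ = ι := by
    rw [← Category.assoc, hcq, pullback.lift_fst]
  have hπW : S.Weq (q ≫ pullback.fst (e ≫ prod.map k k) eQ) :=
    S.weq_of_comp_left c _ hcW (by rw [hcπ]; exact hι)
  obtain ⟨σ, hσ⟩ := hsec _ hπF hπW
  refine ⟨h ≫ σ ≫ q ≫ pullback.snd (e ≫ prod.map k k) eQ, ?_⟩
  calc (h ≫ σ ≫ q ≫ pullback.snd (e ≫ prod.map k k) eQ) ≫ eQ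
      = h ≫ σ ≫ q ≫ (pullback.snd (e ≫ prod.map k k) eQ ≫ eQ) := by
        simp only [Category.assoc]
    _ = h ≫ σ ≫ q ≫ (pullback.fst (e ≫ prod.map k k) eQ ≫ (e ≫ prod.map k k)) := by
        rw [← pullback.condition]
    _ = h ≫ (σ ≫ q ≫ pullback.fst (e ≫ prod.map k k) eQ) ≫ (e ≫ prod.map k k) := by
        simp only [Category.assoc]
    _ = h ≫ e ≫ prod.map k k := by rw [hσ, Category.id_comp]
    _ = prod.lift f₁ f₂ ≫ prod.map k k := by rw [← Category.assoc, he]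
    _ = prod.lift (f₁ ≫ k) (f₂ ≫ k) := by
        rw [prod.lift_map]

/-- Push a pre-homotopy forward along `k` to an honest homotopy. -/
theorem homotopic_comp_of_pre
    (hsec : ∀ {X Y : C} (t : X ⟶ Y), S.Fib t → S.Weq t → ∃ s : Y ⟶ X, s ≫ t = 𝟙 Y)
    {T R B : C} {f₁ f₂ : T ⟶ R} (hpre : S.Pre f₁ f₂) (k : R ⟶ B) :
    S.Homotopic (f₁ ≫ k) (f₂ ≫ k) := by
  obtain ⟨Q, ιQ, eQ, hιQ, heQ, hQ⟩ := S.pathObj B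
  obtain ⟨H, hH⟩ := S.exists_lift_of_pre hsec hpre k Q ιQ eQ hιQ heQ hQ
  exact ⟨Q, ιQ, eQ, hιQ, heQ, hQ, H,
    by rw [← Category.assoc, hH, prod.lift_fst],
    by rw [← Category.assoc, hH, prod.lift_snd]⟩

/-- Homotopies descend along precomposition with a weak equivalence. -/
theorem homotopic_of_pre_comp
    (hsec : ∀ {X Y : C} (t : X ⟶ Y), S.Fib t → S.Weq t → ∃ s : Y ⟶ X, s ≫ t = 𝟙 Y)
    {A D B : C} (φ : A ⟶ D) (hφ : S.Weq φ) {f g : D ⟶ B}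
    (hpre : S.Pre (φ ≫ f) (φ ≫ g)) : S.Homotopic f g := by
  obtain ⟨Q, ιQ, eQ, hιQ, heQ, hQ⟩ := S.pathObj B
  obtain ⟨H, hH⟩ := S.exists_lift_of_pre hsec hpre (𝟙 B) Q ιQ eQ hιQ heQ hQ
  rw [Category.comp_id, Category.comp_id] at hH
  haveI := S.hasPullback_of_fib (prod.lift f g) eQ heQ
  have hcond : φ ≫ prod.lift f g = H ≫ eQ := by rw [hH, prod.comp_lift]
  obtain ⟨M, c, q, hcW, hqF, hcq⟩ := S.factor (pullback.lift φ H hcond)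
  have hπF : S.Fib (q ≫ pullback.fst (prod.lift f g) eQ) :=
    S.fib_comp _ _ hqF (S.fib_stable _ _ heQ)
  have hcπ : c ≫ q ≫ pullback.fst (prod.lift f g) eQ = φ := by
    rw [← Category.assoc, hcq, pullback.lift_fst]
  have hπW : S.Weq (q ≫ pullback.fst (prod.lift f g) eQ) :=
    S.weq_of_comp_left c _ hcW (by rw [hcπ]; exact hφ)
  obtain ⟨σ, hσ⟩ := hsec _ hπF hπW
  have key : (σ ≫ q ≫ pullback.snd (prod.lift f g) eQ) ≫ eQ = prod.lift f g := by
    calc (σ ≫ q ≫ pullback.snd (prod.lift f g) eQ) ≫ eQ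
        = σ ≫ q ≫ (pullback.snd (prod.lift f g) eQ ≫ eQ) := by simp only [Category.assoc]
      _ = σ ≫ q ≫ (pullback.fst (prod.lift f g) eQ ≫ prod.lift f g) := by
          rw [← pullback.condition]
      _ = (σ ≫ q ≫ pullback.fst (prod.lift f g) eQ) ≫ prod.lift f g := by
          simp only [Category.assoc]
      _ = prod.lift f g := by rw [hσ, Category.id_comp]
  exact ⟨Q, ιQ, eQ, hιQ, heQ, hQ, σ ≫ q ≫ pullback.snd (prod.lift f g) eQ,
    by rw [← Category.assoc, key, prod.lift_fst],
    by rw [← Category.assoc, key, prod.lift_snd]⟩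

end BrownCFO

/-- In a category of fibrant objects in which every trivial fibration admits a section,
every weak equivalence is a homotopy equivalence. -/
theorem stmt_9 {C : Type u} [Category.{v} C] [HasTerminal C] [HasBinaryProducts C]
    (S : BrownCFO C)
    (hsec : ∀ {X Y : C} (t : X ⟶ Y), S.Fib t → S.Weq t → ∃ s : Y ⟶ X, s ≫ t = 𝟙 Y)
    {X Y : C} (w : X ⟶ Y) (hw : S.Weq w) :
    ∃ y : Y ⟶ X, S.Homotopic (y ≫ w) (𝟙 Y) ∧ S.Homotopic (w ≫ y) (𝟙 X) := by
  -- factor `w` as a weak equivalence `a` followed by a (necessarily trivial) fibration `p`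
  obtain ⟨Z, a, p, ha, hpF, hap⟩ := S.factor w
  have hpW : S.Weq p := S.weq_of_comp_left a p ha (by rw [hap]; exact hw)
  obtain ⟨v, hv⟩ := hsec p hpF hpW
  -- factor the "graph" map `(a, 𝟙) : X ⟶ Z ×_⊤ X` as weak equivalence ≫ fibration
  haveI := S.hasPullback_of_fib (terminal.from Z) (terminal.from X) (S.fib_terminal X)
  have hjcond : a ≫ terminal.from Z = 𝟙 X ≫ terminal.from X :=
    terminal.hom_ext _ _
  obtain ⟨M, c, q, hcW, hqF, hcq⟩ := S.factor (pullback.lift a (𝟙 X) hjcond)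
  -- `π : M ⟶ Z` is a trivial fibration, `ρ : M ⟶ X` is the "retraction carrier"
  have hcπ : c ≫ q ≫ pullback.fst (terminal.from Z) (terminal.from X) = a := by
    rw [← Category.assoc, hcq, pullback.lift_fst]
  have hcρ : c ≫ q ≫ pullback.snd (terminal.from Z) (terminal.from X) = 𝟙 X := by
    rw [← Category.assoc, hcq, pullback.lift_snd]
  have hπF : S.Fib (q ≫ pullback.fst (terminal.from Z) (terminal.from X)) :=
    S.fib_comp _ _ hqF (S.fib_stable _ _ (S.fib_terminal X))
  have hπW : S.Weq (q ≫ pullback.fst (terminal.from Z) (terminal.from X)) :=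
    S.weq_of_comp_left c _ hcW (by rw [hcπ]; exact ha)
  obtain ⟨σ, hσ⟩ := hsec _ hπF hπW
  -- the composite `τ := π ≫ p : M ⟶ Y` is a trivial fibration equalizing
  -- `w ≫ (v ≫ σ)` and `c`
  have hτF : S.Fib ((q ≫ pullback.fst (terminal.from Z) (terminal.from X)) ≫ p) :=
    S.fib_comp _ _ hπF hpF
  have hτW : S.Weq ((q ≫ pullback.fst (terminal.from Z) (terminal.from X)) ≫ p) :=
    S.weq_comp _ _ hπW hpW
  have hEq : (w ≫ (v ≫ σ)) ≫ ((q ≫ pullback.fst (terminal.from Z) (terminal.from X)) ≫ p)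
      = c ≫ ((q ≫ pullback.fst (terminal.from Z) (terminal.from X)) ≫ p) := by
    have r1 : (w ≫ (v ≫ σ)) ≫ ((q ≫ pullback.fst (terminal.from Z) (terminal.from X)) ≫ p)
        = w ≫ v ≫ (σ ≫ q ≫ pullback.fst (terminal.from Z) (terminal.from X)) ≫ p := by
      simp only [Category.assoc]
    have r2 : c ≫ ((q ≫ pullback.fst (terminal.from Z) (terminal.from X)) ≫ p)
        = (c ≫ q ≫ pullback.fst (terminal.from Z) (terminal.from X)) ≫ p := by
      simp only [Category.assoc]
    rw [r1, r2, hσ, Category.id_comp, hcπ, hap]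
    rw [hv, Category.comp_id]
  have hpre : S.Pre (w ≫ (v ≫ σ)) c :=
    S.pre_of_eq_comp hsec _ hτF hτW _ _ hEq
  refine ⟨(v ≫ σ) ≫ (q ≫ pullback.snd (terminal.from Z) (terminal.from X)), ?_, ?_⟩
  · -- `Homotopic (y ≫ w) (𝟙 Y)` via descent along `w`
    apply S.homotopic_of_pre_comp hsec w hw
    have h2 := S.homotopic_comp_of_pre hsec hpre
      ((q ≫ pullback.snd (terminal.from Z) (terminal.from X)) ≫ w)
    have e1 : (w ≫ (v ≫ σ)) ≫ ((q ≫ pullback.snd (terminal.from Z) (terminal.from X)) ≫ w)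
        = w ≫ ((v ≫ σ) ≫ (q ≫ pullback.snd (terminal.from Z) (terminal.from X))) ≫ w := by
      simp only [Category.assoc]
    have e2 : c ≫ ((q ≫ pullback.snd (terminal.from Z) (terminal.from X)) ≫ w)
        = w ≫ 𝟙 Y := by
      rw [← Category.assoc, hcρ, Category.id_comp, Category.comp_id]
    rw [e1, e2] at h2
    exact S.pre_of_homotopic h2
  · -- `Homotopic (w ≫ y) (𝟙 X)`
    have h1 := S.homotopic_comp_of_pre hsec hpre
      (q ≫ pullback.snd (terminal.from Z) (terminal.from X))
    have e1 : (w ≫ (v ≫ σ)) ≫ (q ≫ pullback.snd (terminal.from Z) (terminal.from X))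
        = w ≫ ((v ≫ σ) ≫ (q ≫ pullback.snd (terminal.from Z) (terminal.from X))) := by
      simp only [Category.assoc]
    rw [e1, hcρ] at h1
    exact h1
end

section
/- In a category of fibrant objects where every trivial fibration admits a section, the relation 'f ≈ g iff there is a weak equivalence t with f∘t ≃ g∘t' coincides with the homotopy relation: f ≈ g if and only if f ≃ g. -/
open CategoryTheory Limits

universe u v

/-!
If `h : X' ⟶ P` is a homotopy from `t ≫ f` to `t ≫ g` with `t` a weak equivalence, then `t`
factors through the base change `q : Q ⟶ X` of the fibration `e : P ⟶ Y ⨯ Y` along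
`prod.lift f g`. Factoring `X' ⟶ Q` as a weak equivalence followed by a fibration `p`, the
composite `p ≫ q` is a trivial fibration by 2-out-of-3, so it has a section; pushing that
section to `P` gives a homotopy from `f` to `g`.
-/

namespace BrownCFO

variable {C : Type u} [Category.{v} C] [HasTerminal C] [HasBinaryProducts C] (S : BrownCFO C)

def HasSections : Prop :=
  ∀ {X Y : C} (t : X ⟶ Y), S.Fib t → S.Weq t → ∃ s : Y ⟶ X, s ≫ t = 𝟙 Y

variable {S}

theorem homotopic_iff {X Y : C} (f g : X ⟶ Y) :
    S.Homotopic f g ↔ ∃ (P : C) (ι : Y ⟶ P) (e : P ⟶ Y ⨯ Y),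
      S.Weq ι ∧ S.Fib e ∧ ι ≫ e = prod.lift (𝟙 Y) (𝟙 Y) ∧
      ∃ h : X ⟶ P, h ≫ e = prod.lift f g := by
  refine exists₃_congr fun P ι e => and_congr_right' <| and_congr_right' <|
    and_congr_right' <| exists_congr fun h => ?_
  constructor
  · rintro ⟨rfl, rfl⟩
    ext
    · rw [Category.assoc, prod.lift_fst]
    · rw [Category.assoc, prod.lift_snd]
  · intro he
    rw [reassoc_of% he, reassoc_of% he]
    exact ⟨prod.lift_fst f g, prod.lift_snd f g⟩

theorem exists_section_of_fib_of_comp_weq (hS : S.HasSections) {X' Q X : C} (j : X' ⟶ Q)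
    (q : Q ⟶ X) (hq : S.Fib q) (hjq : S.Weq (j ≫ q)) : ∃ s : X ⟶ Q, s ≫ q = 𝟙 X := by
  obtain ⟨Z, w, p, hw, hp, rfl⟩ := S.factor j
  have hpq : S.Weq (p ≫ q) := S.weq_of_comp_left w _ hw (by simpa using hjq)
  obtain ⟨s, hs⟩ := hS _ (S.fib_comp _ _ hp hq) hpq
  exact ⟨s ≫ p, by simpa using hs⟩

theorem exists_lift_of_weq_comp_lift (hS : S.HasSections) {X' X P Z : C} (e : P ⟶ Z)
    (he : S.Fib e) (k : X ⟶ Z) (t : X' ⟶ X) (ht : S.Weq t) (h : X' ⟶ P)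
    (hh : h ≫ e = t ≫ k) : ∃ l : X ⟶ P, l ≫ e = k := by
  have := S.hasPullback_of_fib k e he
  obtain ⟨s, hs⟩ := exists_section_of_fib_of_comp_weq hS (pullback.lift t h hh.symm)
    (pullback.fst k e) (S.fib_stable k e he) (by rwa [pullback.lift_fst])
  refine ⟨s ≫ pullback.snd k e, ?_⟩
  rw [Category.assoc, ← pullback.condition, reassoc_of% hs]

end BrownCFO

/-- In a category of fibrant objects in which every trivial fibration admits a section,
the relation `f ≈ g` ("`f∘t ≃ g∘t` after precomposing with some weak equivalence `t`")
coincides with the homotopy relation `f ≃ g`. -/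
theorem stmt_10 {C : Type u} [Category.{v} C] [HasTerminal C] [HasBinaryProducts C]
    (S : BrownCFO C)
    (hsec : ∀ {X Y : C} (t : X ⟶ Y), S.Fib t → S.Weq t → ∃ s : Y ⟶ X, s ≫ t = 𝟙 Y)
    {X Y : C} (f g : X ⟶ Y) :
    (∃ (X' : C) (t : X' ⟶ X), S.Weq t ∧ S.Homotopic (t ≫ f) (t ≫ g)) ↔
      S.Homotopic f g := by
  constructor
  · rintro ⟨X', t, ht, hft⟩
    obtain ⟨P, ι, e, hι, he, hιe, h, hh⟩ := (BrownCFO.homotopic_iff _ _).1 hft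
    obtain ⟨l, hl⟩ := BrownCFO.exists_lift_of_weq_comp_lift hsec e he (prod.lift f g) t ht h
      (by rw [hh]; ext <;> simp)
    exact (BrownCFO.homotopic_iff f g).2 ⟨P, ι, e, hι, he, hιe, l, hl⟩
  · intro hfg
    exact ⟨X, 𝟙 X, S.weq_id X, by simpa using hfg⟩
end

section
/- Let t : X′ → X be a trivial fibration in a category of fibrant objects and s a section of t. Then forming the factorization X′ → P → X′ × X′ of the canonical map X′ → X′ ×_X X′ → X′ × X′ (weak equivalence followed by fibration) yields a path space object for X′, with respect to which the map s∘t × id : X′ → X′ × X′ factors through X′ ×_X X′ and hence lifts to a homotopy from s∘t to id. -/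
/-!
The base change `pullback.fst t t` of the trivial fibration `t` is a trivial fibration, and the
diagonal `X′ → X′ ×_X X′` is a section of it, hence a weak equivalence by 2-out-of-3. Since
`(t ≫ s) ≫ t = t`, the pair `(s∘t, id)` defines a map into `X′ ×_X X′`; composing with the
factorization of `X′ ×_X X′ → X′ × X′` gives the homotopy.
-/

open CategoryTheory Limits

universe u v

theorem CategoryTheory.Limits.pullback.lift_comp_prod_lift_fst_snd {C : Type u} [Category.{v} C]
    [HasBinaryProducts C] {W X Y Z : C} {f : X ⟶ Z} {g : Y ⟶ Z} [HasPullback f g]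
    (a : W ⟶ X) (b : W ⟶ Y) (hab : a ≫ f = b ≫ g) :
    pullback.lift a b hab ≫ prod.lift (pullback.fst f g) (pullback.snd f g) = prod.lift a b := by
  apply prod.hom_ext <;>
    simp only [prod.comp_lift, prod.lift_fst, prod.lift_snd, pullback.lift_fst, pullback.lift_snd]

namespace BrownCFO

variable {C : Type u} [Category.{v} C] [HasTerminal C] [HasBinaryProducts C] (S : BrownCFO C)

theorem weq_of_section {A B : C} {f : A ⟶ B} {g : B ⟶ A} (hg : S.Weq g) (hfg : f ≫ g = 𝟙 A) :
    S.Weq f :=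
  S.weq_of_comp_right f g hg (hfg ▸ S.weq_id A)

theorem weq_pullback_diagonal {X' X : C} {t : X' ⟶ X} (ht_fib : S.Fib t) (ht_weq : S.Weq t)
    [HasPullback t t] : S.Weq (pullback.diagonal t) :=
  S.weq_of_section (S.trivFib_stable t t ht_fib ht_weq) (pullback.diagonal_fst t)

end BrownCFO

/-- Let `t : X′ → X` be a trivial fibration with section `s`. Factoring the canonical map
`X′ ×_X X′ → X′ × X′` as a weak equivalence `w` followed by a fibration `p` yields a path
space object for `X′` (with weak equivalence the composite of the diagonal
`X′ → X′ ×_X X′` with `w`), and the map `(s∘t, id) : X′ → X′ × X′` factors through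
`X′ ×_X X′`, hence lifts along `w` to a homotopy from `s∘t` to `id_{X′}`. -/
theorem stmt_19 {C : Type u} [Category.{v} C] [HasTerminal C] [HasBinaryProducts C]
    (S : BrownCFO C) {X' X : C} (t : X' ⟶ X) (ht_fib : S.Fib t) (ht_weq : S.Weq t)
    (s : X ⟶ X') (hs : s ≫ t = 𝟙 X) [HasPullback t t] :
    ∃ (P : C) (w : pullback t t ⟶ P) (p : P ⟶ X' ⨯ X'),
      S.Weq w ∧ S.Fib p ∧
      -- `w` followed by `p` is the canonical map `X′ ×_X X′ → X′ × X′`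
      w ≫ p = prod.lift (pullback.fst t t) (pullback.snd t t) ∧
      -- the diagonal composed with `w` makes `P` a path space object for `X′`
      S.Weq (pullback.lift (𝟙 X') (𝟙 X') rfl ≫ w) ∧
      (pullback.lift (𝟙 X') (𝟙 X') rfl ≫ w) ≫ p = prod.lift (𝟙 X') (𝟙 X') ∧
      -- the lift of `(s∘t, id)` along `w` is a homotopy from `s∘t` to the identity
      (pullback.lift (t ≫ s) (𝟙 X') (by simp [Category.assoc, hs]) ≫ w) ≫ p ≫ prod.fst
          = t ≫ s ∧
      (pullback.lift (t ≫ s) (𝟙 X') (by simp [Category.assoc, hs]) ≫ w) ≫ p ≫ prod.snd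
          = 𝟙 X' := by
  obtain ⟨P, w, p, hw, hp, hwp⟩ := S.factor (prod.lift (pullback.fst t t) (pullback.snd t t))
  have lift_comp_w_p (a b : X' ⟶ X') (hab : a ≫ t = b ≫ t) :
      (pullback.lift a b hab ≫ w) ≫ p = prod.lift a b := by
    rw [Category.assoc, hwp, pullback.lift_comp_prod_lift_fst_snd]
  refine ⟨P, w, p, hw, hp, hwp, S.weq_comp _ w (S.weq_pullback_diagonal ht_fib ht_weq) hw,
    lift_comp_w_p _ _ _, ?_, ?_⟩
  · rw [← Category.assoc, lift_comp_w_p, prod.lift_fst]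
  · rw [← Category.assoc, lift_comp_w_p, prod.lift_snd]
end
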